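/- arXiv:2101.06628 — 5 statements merged into one kernel-verified Lean document; each statement's English description precedes it below -/
import Mathlib

section
/- Let p : ℝ → ℝ be infinitely differentiable and let α > 0 satisfy p'(x) ≥ α for all x ∈ [x₁, x₂]. Then there exists a constant C₃ > 0, depending only on p, α, x₁, x₂, such that for every u : ℝ → ℝ infinitely differentiable with support contained in the open interval (x₁, x₂): ∫_{x₁}^{x₂} p(x) u(x)² u'(x) dx ≥ −C₃ (1 + (∫_{x₁}^{x₂} u(x)² dx)³) − (1/2) ∫_{x₁}^{x₂} p'(x) u'(x)² dx. -/
set_option maxHeartbeats 800000 in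
theorem stmt_4 (x₁ x₂ : ℝ) (hx₁ : x₁ < 0) (hx₂ : 0 < x₂)
    (p : ℝ → ℝ) (hp : ContDiff ℝ (⊤ : ℕ∞) p) (α : ℝ) (hα : 0 < α)
    (hpα : ∀ x ∈ Set.Icc x₁ x₂, α ≤ deriv p x) :
    ∃ C₃ > (0:ℝ),
      ∀ u : ℝ → ℝ, ContDiff ℝ (⊤ : ℕ∞) u → Function.support u ⊆ Set.Ioo x₁ x₂ →
        ∫ x in x₁..x₂, p x * ((u x)^2 * deriv u x) ≥
          -C₃ * (1 + (∫ x in x₁..x₂, (u x)^2)^3)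
            - (1/2) * (∫ x in x₁..x₂, deriv p x * (deriv u x)^2) := by
  have hx12 : x₁ ≤ x₂ := by linarith
  -- bound on p
  obtain ⟨M₀, hM₀⟩ : ∃ M₀, ∀ x ∈ Set.Icc x₁ x₂, ‖p x‖ ≤ M₀ :=
    isCompact_Icc.exists_bound_of_continuousOn hp.continuous.continuousOn
  set M : ℝ := max M₀ 1 with hMdef
  have hM1 : (1:ℝ) ≤ M := le_max_right _ _
  have hM : ∀ x ∈ Set.Icc x₁ x₂, |p x| ≤ M := fun x hx =>
    le_trans (hM₀ x hx) (le_max_left _ _)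
  set K : ℝ := M ^ 2 / α with hKdef
  have hK : 0 < K := div_pos (by positivity) hα
  set D : ℝ := 4 * K ^ 2 / α with hDdef
  have hD : 0 ≤ D := by positivity
  refine ⟨D + K + 1, by linarith, ?_⟩
  intro u hu hsupp
  have hcu : Continuous u := hu.continuous
  have hcu' : Continuous (deriv u) := hu.continuous_deriv (by simp)
  have hcp' : Continuous (deriv p) := hp.continuous_deriv (by simp)
  have hcp : Continuous p := hp.continuous
  have hdu : ∀ x : ℝ, HasDerivAt u (deriv u x) x := fun x =>
    ((hu.differentiable (by simp)) x).hasDerivAt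
  set A : ℝ := ∫ x in x₁..x₂, (u x)^2 with hAdef
  set B : ℝ := ∫ x in x₁..x₂, (deriv u x)^2 with hBdef
  have hA : 0 ≤ A := intervalIntegral.integral_nonneg hx12 (fun x _ => sq_nonneg _)
  have hB : 0 ≤ B := intervalIntegral.integral_nonneg hx12 (fun x _ => sq_nonneg _)
  have hu₁ : u x₁ = 0 := by
    by_contra h
    exact absurd (hsupp (Function.mem_support.2 h)) (by simp)
  set t : ℝ := 4 * K * A / α + 1 with htdef
  have ht : 0 < t := by positivity
  -- sup bound: u x ^ 2 ≤ t * A + t⁻¹ * B on Icc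
  have hsub : ∀ x ∈ Set.Icc x₁ x₂, (u x)^2 ≤ t * A + t⁻¹ * B := by
    intro x hx
    have hftc : (u x)^2 - (u x₁)^2 = ∫ y in x₁..x, 2 * u y * deriv u y := by
      rw [eq_comm]
      apply intervalIntegral.integral_eq_sub_of_hasDerivAt
      · intro y _
        have := ((hdu y).fun_pow 2)
        simpa [mul_comm] using this
      · exact ((continuous_const.mul hcu).mul hcu').intervalIntegrable _ _
    have hftc' : (u x)^2 = ∫ y in x₁..x, 2 * u y * deriv u y := by
      rw [hu₁] at hftc; simpa using hftc
    have h1 : (∫ y in x₁..x, 2 * u y * deriv u y)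
        ≤ ∫ y in x₁..x, (t * (u y)^2 + t⁻¹ * (deriv u y)^2) := by
      apply intervalIntegral.integral_mono_on hx.1
      · exact ((continuous_const.mul hcu).mul hcu').intervalIntegrable _ _
      · exact ((continuous_const.mul (hcu.pow 2)).add
          (continuous_const.mul (hcu'.pow 2))).intervalIntegrable _ _
      · intro y _
        have h := div_nonneg (sq_nonneg (t * u y - deriv u y)) ht.le
        have e : (t * u y - deriv u y)^2 / t
            = t * (u y)^2 - 2 * u y * deriv u y + t⁻¹ * (deriv u y)^2 := by
          field_simp; ring
        linarith [e ▸ h]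
    have h2 : (∫ y in x₁..x, (t * (u y)^2 + t⁻¹ * (deriv u y)^2))
        ≤ ∫ y in x₁..x₂, (t * (u y)^2 + t⁻¹ * (deriv u y)^2) := by
      apply intervalIntegral.integral_mono_interval le_rfl hx.1 hx.2
      · filter_upwards with y
        simp only [Pi.zero_apply]
        positivity
      · exact ((continuous_const.mul (hcu.pow 2)).add
          (continuous_const.mul (hcu'.pow 2))).intervalIntegrable _ _
    have h3 : (∫ y in x₁..x₂, (t * (u y)^2 + t⁻¹ * (deriv u y)^2)) = t * A + t⁻¹ * B := by
      rw [intervalIntegral.integral_add (f := fun y => t * (u y)^2) (g := fun y => t⁻¹ * (deriv u y)^2)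
          ((continuous_const.mul (hcu.pow 2)).intervalIntegrable _ _)
          ((continuous_const.mul (hcu'.pow 2)).intervalIntegrable _ _),
        intervalIntegral.integral_const_mul, intervalIntegral.integral_const_mul]
    linarith [hftc', h1, h2, h3.le, h3.ge]
  -- fourth power bound
  set Q : ℝ := ∫ x in x₁..x₂, (u x)^4 with hQdef
  have hQ0 : 0 ≤ Q := intervalIntegral.integral_nonneg hx12 (fun x _ => by positivity)
  have hQ : Q ≤ (t * A + t⁻¹ * B) * A := by
    have h : Q ≤ ∫ x in x₁..x₂, (t * A + t⁻¹ * B) * (u x)^2 := by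
      apply intervalIntegral.integral_mono_on hx12
      · exact (hcu.pow 4).intervalIntegrable _ _
      · exact (continuous_const.mul (hcu.pow 2)).intervalIntegrable _ _
      · intro x hx
        have h1 := hsub x hx
        nlinarith [sq_nonneg (u x), sq_nonneg ((u x)^2)]
    rwa [intervalIntegral.integral_const_mul] at h
  -- main lower bound on the integral
  have hmain : (∫ x in x₁..x₂, p x * ((u x)^2 * deriv u x))
      ≥ -(α/4) * B - K * Q := by
    have h1 : (∫ x in x₁..x₂, (-(α/4) * (deriv u x)^2 - K * (u x)^4))
        ≤ ∫ x in x₁..x₂, p x * ((u x)^2 * deriv u x) := by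
      apply intervalIntegral.integral_mono_on hx12
      · exact ((continuous_const.mul (hcu'.pow 2)).sub
          (continuous_const.mul (hcu.pow 4))).intervalIntegrable _ _
      · exact (hcp.mul ((hcu.pow 2).mul hcu')).intervalIntegrable _ _
      · intro x hx
        have hpx := hM x hx
        have hpx2 : (p x)^2 ≤ M^2 := by nlinarith [abs_le.mp hpx, sq_abs (p x)]
        have key : -(α^2/4) * (deriv u x)^2 - M^2 * (u x)^4
            ≤ α * (p x * ((u x)^2 * deriv u x)) := by
          nlinarith [sq_nonneg (α * deriv u x + 2 * p x * (u x)^2),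
            mul_le_mul_of_nonneg_right hpx2 (sq_nonneg ((u x)^2))]
        have h2 := (div_le_iff₀' hα).mpr key
        calc -(α/4) * (deriv u x)^2 - K * (u x)^4
            = (-(α^2/4) * (deriv u x)^2 - M^2 * (u x)^4) / α := by
              rw [hKdef]; field_simp
          _ ≤ _ := h2
    have h2 : (∫ x in x₁..x₂, (-(α/4) * (deriv u x)^2 - K * (u x)^4))
        = -(α/4) * B - K * Q := by
      rw [intervalIntegral.integral_sub (f := fun x => -(α/4) * (deriv u x)^2) (g := fun x => K * (u x)^4)
          ((continuous_const.mul (hcu'.pow 2)).intervalIntegrable _ _)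
          ((continuous_const.mul (hcu.pow 4)).intervalIntegrable _ _),
        intervalIntegral.integral_const_mul, intervalIntegral.integral_const_mul]
    linarith [h1, h2.symm.le, h2.le]
  -- coercivity of p' term
  have hP : (∫ x in x₁..x₂, deriv p x * (deriv u x)^2) ≥ α * B := by
    have h1 : (∫ x in x₁..x₂, α * (deriv u x)^2)
        ≤ ∫ x in x₁..x₂, deriv p x * (deriv u x)^2 := by
      apply intervalIntegral.integral_mono_on hx12
      · exact (continuous_const.mul (hcu'.pow 2)).intervalIntegrable _ _
      · exact (hcp'.mul (hcu'.pow 2)).intervalIntegrable _ _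
      · intro x hx
        exact mul_le_mul_of_nonneg_right (hpα x hx) (sq_nonneg _)
    rwa [intervalIntegral.integral_const_mul] at h1
  -- final arithmetic
  have h3 : K * A * B * t⁻¹ ≤ α/4 * B := by
    have h4 : K * A * B ≤ (α/4 * B) * t := by
      have e : (α/4 * B) * t = K * A * B + α/4 * B := by
        rw [htdef]; field_simp
      nlinarith [e]
    calc K * A * B * t⁻¹ ≤ ((α/4 * B) * t) * t⁻¹ :=
          mul_le_mul_of_nonneg_right h4 (inv_nonneg.2 ht.le)
      _ = α/4 * B := by
          rw [mul_assoc, mul_inv_cancel₀ ht.ne', mul_one]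
  have h5 : K * (t * A * A) = D * A^3 + K * A^2 := by
    rw [htdef, hDdef]; field_simp
  have hKQ : K * Q ≤ D * A^3 + K * A^2 + α/4 * B := by
    have h6 : K * Q ≤ K * ((t * A + t⁻¹ * B) * A) :=
      mul_le_mul_of_nonneg_left hQ hK.le
    have h7 : K * ((t * A + t⁻¹ * B) * A) = K * (t * A * A) + K * A * B * t⁻¹ := by ring
    calc K * Q ≤ K * ((t * A + t⁻¹ * B) * A) := h6
      _ = K * (t * A * A) + K * A * B * t⁻¹ := h7
      _ = D * A ^ 3 + K * A ^ 2 + K * A * B * t⁻¹ := by rw [h5]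
      _ ≤ D * A ^ 3 + K * A ^ 2 + α / 4 * B := by linarith [h3]
  have hA2 : A^2 ≤ 1 + A^3 := by
    nlinarith [mul_nonneg hA (sq_nonneg (A - 1)), sq_nonneg (A - 1)]
  nlinarith [hmain, hKQ, hP, hA2, hK.le, hD, mul_nonneg hD (pow_nonneg hA 3),
    mul_nonneg hK.le (sub_nonneg.2 hA2)]
end

section
/- Let u : ℝ → ℝ be continuously differentiable with compact support. Then ∫_ℝ u(x)⁴ dx ≤ 2 (∫_ℝ u(x)² dx)^{3/2} (∫_ℝ u'(x)² dx)^{1/2}. -/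
/-! Writing `u(x)² = ∫_{-∞}^x 2 u u'` and applying Cauchy–Schwarz gives the Agmon-type bound
`‖u‖_∞² ≤ 2 ‖u‖₂ ‖u'‖₂`; then `∫ u⁴ ≤ ‖u‖_∞² ∫ u²`. -/

open MeasureTheory Set

theorem integral_abs_mul_le_rpow_integral_sq_mul {α : Type*} [MeasurableSpace α] {μ : Measure α}
    {f g : α → ℝ} (hf : MemLp f 2 μ) (hg : MemLp g 2 μ) :
    ∫ a, |f a * g a| ∂μ ≤
      (∫ a, f a ^ 2 ∂μ) ^ ((1:ℝ)/2) * (∫ a, g a ^ 2 ∂μ) ^ ((1:ℝ)/2) := by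
  have h := integral_mul_norm_le_Lp_mul_Lq Real.HolderConjugate.two_two
    (by simpa using hf) (by simpa using hg)
  simp only [Real.norm_eq_abs, ← abs_mul, Real.rpow_two, sq_abs] at h
  exact h

theorem integral_pow_four_le_of_sq_le {α : Type*} [MeasurableSpace α] {μ : Measure α}
    {f : α → ℝ} {M : ℝ} (hf : Integrable (fun a => f a ^ 2) μ) (hM : ∀ a, f a ^ 2 ≤ M) :
    ∫ a, f a ^ 4 ∂μ ≤ M * ∫ a, f a ^ 2 ∂μ := by
  rw [← integral_const_mul]
  refine integral_mono_of_nonneg (ae_of_all _ fun a => by positivity) (hf.const_mul M)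
    (ae_of_all _ fun a => ?_)
  calc f a ^ 4 = f a ^ 2 * f a ^ 2 := by ring
    _ ≤ M * f a ^ 2 := mul_le_mul_of_nonneg_right (hM a) (sq_nonneg _)

theorem sq_le_two_mul_integral_abs_mul_deriv {u : ℝ → ℝ} (hu : ContDiff ℝ 1 u)
    (hsupp : HasCompactSupport u) (x : ℝ) :
    u x ^ 2 ≤ 2 * ∫ y, |u y * deriv u y| := by
  have hderiv : deriv (fun y => u y ^ 2) = fun y => 2 * (u y * deriv u y) := by
    ext y
    exact ((hu.differentiable one_ne_zero y).hasDerivAt.pow 2).deriv.trans (by ring)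
  have hint : Integrable (fun y => u y * deriv u y) :=
    (hu.continuous.mul (hu.continuous_deriv le_rfl)).integrable_of_hasCompactSupport
      hsupp.mul_right
  have hsupp_sq : HasCompactSupport (fun y => u y ^ 2) :=
    hsupp.comp_left (g := fun t : ℝ => t ^ 2) (zero_pow two_ne_zero)
  calc u x ^ 2 = ∫ y in Iic x, 2 * (u y * deriv u y) := by
        rw [← hderiv, hsupp_sq.integral_Iic_deriv_eq (hu.pow 2)]
    _ ≤ ∫ y in Iic x, 2 * |u y * deriv u y| :=
        setIntegral_mono (hint.const_mul 2).integrableOn (hint.abs.const_mul 2).integrableOn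
          fun y => by gcongr; exact le_abs_self _
    _ ≤ ∫ y, 2 * |u y * deriv u y| :=
        setIntegral_le_integral (hint.abs.const_mul 2) (ae_of_all _ fun y => by positivity)
    _ = 2 * ∫ y, |u y * deriv u y| := integral_const_mul 2 _

theorem stmt_7 (u : ℝ → ℝ) (hu : ContDiff ℝ 1 u) (hsupp : HasCompactSupport u) :
    ∫ x : ℝ, (u x)^4 ≤
      2 * (∫ x : ℝ, (u x)^2) ^ ((3:ℝ)/2) * (∫ x : ℝ, (deriv u x)^2) ^ ((1:ℝ)/2) := by
  set A := ∫ x : ℝ, (u x)^2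
  set B := ∫ x : ℝ, (deriv u x)^2
  have hu_L2 : MemLp u 2 := hu.continuous.memLp_of_hasCompactSupport hsupp
  have hu'_L2 : MemLp (deriv u) 2 :=
    (hu.continuous_deriv le_rfl).memLp_of_hasCompactSupport hsupp.deriv
  have hsup : ∀ x, u x ^ 2 ≤ 2 * (A ^ ((1:ℝ)/2) * B ^ ((1:ℝ)/2)) := fun x =>
    (sq_le_two_mul_integral_abs_mul_deriv hu hsupp x).trans <|
      mul_le_mul_of_nonneg_left (integral_abs_mul_le_rpow_integral_sq_mul hu_L2 hu'_L2) two_pos.le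
  have hA : A ^ ((3:ℝ)/2) = A * A ^ ((1:ℝ)/2) := by
    rw [show (3:ℝ)/2 = 1 + 1/2 by norm_num,
      Real.rpow_add' (integral_nonneg fun x => sq_nonneg _) (by norm_num), Real.rpow_one]
  calc ∫ x, u x ^ 4 ≤ 2 * (A ^ ((1:ℝ)/2) * B ^ ((1:ℝ)/2)) * A :=
        integral_pow_four_le_of_sq_le hu_L2.integrable_sq hsup
    _ = 2 * A ^ ((3:ℝ)/2) * B ^ ((1:ℝ)/2) := by rw [hA]; ring
end

section
/- Let a < b be real numbers and let u : ℝ → ℝ be continuously differentiable. Then for every x ∈ [a, b], u(x)² ≤ 2 (∫_a^b u(y)² dy)^{1/2} (∫_a^b u'(y)² dy)^{1/2} + (b − a)^{-1} ∫_a^b u(y)² dy. -/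
/-!
Since `(u²)' = 2 u u'`, for all `x, y ∈ [a, b]` the value `u(x)²` exceeds `u(y)²` by at most
`∫_a^b |2 u u'|`, which Cauchy–Schwarz bounds by `2 ‖u‖₂ ‖u'‖₂`. Averaging the resulting lower
bound for `u(y)²` over `y ∈ [a, b]` produces the term `(b - a)⁻¹ ∫_a^b u²`.
-/

open MeasureTheory Set

theorem integral_abs_mul_le_sqrt_mul_sqrt {α : Type*} [MeasurableSpace α] {μ : Measure α}
    {f g : α → ℝ} (hf : MemLp f 2 μ) (hg : MemLp g 2 μ) :
    ∫ x, |f x * g x| ∂μ ≤ √(∫ x, f x ^ 2 ∂μ) * √(∫ x, g x ^ 2 ∂μ) := by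
  rw [← ENNReal.ofReal_ofNat] at hf hg
  have holder := integral_mul_norm_le_Lp_mul_Lq Real.HolderConjugate.two_two hf hg
  simp only [Real.norm_eq_abs, Real.rpow_ofNat, sq_abs] at holder
  simpa only [abs_mul, Real.sqrt_eq_rpow, one_div] using holder

theorem intervalIntegral.integral_abs_mul_le_sqrt_mul_sqrt {a b : ℝ} (hab : a ≤ b)
    {f g : ℝ → ℝ} (hf : Continuous f) (hg : Continuous g) :
    ∫ y in a..b, |f y * g y| ≤ √(∫ y in a..b, f y ^ 2) * √(∫ y in a..b, g y ^ 2) := by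
  have memLp_two {h : ℝ → ℝ} (hh : Continuous h) : MemLp h 2 (volume.restrict (Ioc a b)) :=
    (memLp_two_iff_integrable_sq hh.aestronglyMeasurable).2 (hh.pow 2).integrableOn_Ioc
  simp only [intervalIntegral.integral_of_le hab]
  exact _root_.integral_abs_mul_le_sqrt_mul_sqrt (memLp_two hf) (memLp_two hg)

theorem abs_sub_le_integral_abs_deriv {f f' : ℝ → ℝ} {a b x y : ℝ}
    (hf : ∀ t ∈ Icc a b, HasDerivAt f (f' t) t) (hf' : IntervalIntegrable f' volume a b)
    (hx : x ∈ Icc a b) (hy : y ∈ Icc a b) :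
    |f x - f y| ≤ ∫ t in a..b, |f' t| := by
  wlog hyx : y ≤ x generalizing x y
  · rw [abs_sub_comm]
    exact this hy hx (le_of_not_ge hyx)
  have hsub : uIcc y x ⊆ uIcc a b := by
    rw [uIcc_of_le hyx, uIcc_of_le (hx.1.trans hx.2)]
    exact Icc_subset_Icc hy.1 hx.2
  have hftc : ∫ t in y..x, f' t = f x - f y :=
    intervalIntegral.integral_eq_sub_of_hasDerivAt
      (fun t ht => hf t (uIcc_of_le (hx.1.trans hx.2) ▸ hsub ht)) (hf'.mono_set hsub)
  calc |f x - f y| = |∫ t in y..x, f' t| := by rw [hftc]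
    _ ≤ ∫ t in y..x, |f' t| := intervalIntegral.abs_integral_le_integral_abs hyx
    _ ≤ ∫ t in a..b, |f' t| :=
      intervalIntegral.integral_mono_interval hy.1 hyx hx.2
        (Filter.Eventually.of_forall fun t => abs_nonneg _) hf'.abs

theorem le_inv_mul_integral_of_forall_le {g : ℝ → ℝ} {a b c : ℝ} (hab : a < b)
    (hg : IntervalIntegrable g volume a b) (h : ∀ y ∈ Icc a b, c ≤ g y) :
    c ≤ (b - a)⁻¹ * ∫ y in a..b, g y := by
  have hmono : ∫ _ in a..b, c ≤ ∫ y in a..b, g y :=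
    intervalIntegral.integral_mono_on hab.le intervalIntegrable_const hg h
  rw [intervalIntegral.integral_const, smul_eq_mul] at hmono
  rw [le_inv_mul_iff₀ (sub_pos.2 hab)]
  exact hmono

theorem stmt_8 (a b : ℝ) (hab : a < b) (u : ℝ → ℝ) (hu : ContDiff ℝ 1 u) :
    ∀ x ∈ Set.Icc a b, (u x)^2 ≤
      2 * Real.sqrt (∫ y in a..b, (u y)^2) * Real.sqrt (∫ y in a..b, (deriv u y)^2)
        + (b - a)⁻¹ * ∫ y in a..b, (u y)^2 := by
  intro x hx
  have hu' : Continuous (deriv u) := hu.continuous_deriv le_rfl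
  have hsq_deriv (t : ℝ) : HasDerivAt (fun s => u s ^ 2) (2 * (u t * deriv u t)) t := by
    have hu_t := (hu.differentiable one_ne_zero t).hasDerivAt
    refine (hu_t.fun_pow 2).congr_deriv ?_
    ring
  have hosc : ∀ y ∈ Icc a b, u x ^ 2 - 2 * ∫ t in a..b, |u t| * |deriv u t| ≤ u y ^ 2 := by
    intro y hy
    have h := abs_sub_le_integral_abs_deriv (fun t _ => hsq_deriv t)
      ((continuous_const.mul (hu.continuous.mul hu')).intervalIntegrable a b) hx hy
    simp only [abs_mul, abs_two, intervalIntegral.integral_const_mul] at h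
    linarith [le_abs_self (u x ^ 2 - u y ^ 2)]
  have hmean := le_inv_mul_integral_of_forall_le (g := fun y => u y ^ 2) hab
    ((hu.continuous.pow 2).intervalIntegrable a b) hosc
  have hcs := intervalIntegral.integral_abs_mul_le_sqrt_mul_sqrt hab.le hu.continuous hu'
  simp only [abs_mul] at hcs
  linarith
end

section
/- For every k > 0 there exists a constant C(k) > 0 such that for every continuously differentiable u : ℝ → ℝ and every continuously differentiable φ : ℝ → ℝ with support contained in the open interval (−k, k): |∫_{−k}^{k} u(x) u'(x) φ(x) dx| ≤ C(k) (∫_{−k}^{k} u² dx)^{3/4} (∫_{−k}^{k} u² dx + ∫_{−k}^{k} (u')² dx)^{1/4} (∫_{−k}^{k} φ² dx + ∫_{−k}^{k} (φ')² dx)^{1/2}. -/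
/-!
Integrating by parts moves the derivative onto the test function:
`∫ u u' φ = -½ ∫ u² φ'`, so by Cauchy–Schwarz the left side is at most `½ ‖u²‖₂ ‖φ'‖₂`.
Then `‖u²‖₂² = ∫ u⁴ ≤ ‖u‖∞² ‖u‖₂²`, and the one-dimensional Agmon inequality
`‖u‖∞² ≤ ‖u‖₂² / (2k) + 2 ‖u‖₂ ‖u'‖₂` (the fundamental theorem of calculus for `u²`, started at a
point where `u²` is at most its mean) bounds `‖u‖∞²` by a multiple of `‖u‖₂ ‖u‖_{H¹}`.
-/

open MeasureTheory Set intervalIntegral Real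
open scoped Interval

lemma Continuous.memLp_two_restrict_Ioc {f : ℝ → ℝ} (hf : Continuous f) (a b : ℝ) :
    MemLp f 2 (volume.restrict (Ioc a b)) :=
  (memLp_two_iff_integrable_sq hf.aestronglyMeasurable).2 (hf.pow 2).integrableOn_Ioc

section

variable {a b : ℝ} {u : ℝ → ℝ}

lemma abs_intervalIntegral_mul_le (hab : a ≤ b) {f g : ℝ → ℝ}
    (hf : Continuous f) (hg : Continuous g) :
    |∫ x in a..b, f x * g x| ≤ √(∫ x in a..b, f x ^ 2) * √(∫ x in a..b, g x ^ 2) := by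
  have holder := integral_mul_norm_le_Lp_mul_Lq (μ := volume.restrict (Ioc a b))
    Real.HolderConjugate.two_two (by simpa using hf.memLp_two_restrict_Ioc a b)
    (by simpa using hg.memLp_two_restrict_Ioc a b)
  simp only [norm_eq_abs, rpow_two, sq_abs, ← sqrt_eq_rpow] at holder
  simp only [integral_of_le hab]
  calc |∫ x in Ioc a b, f x * g x| ≤ ∫ x in Ioc a b, |f x| * |g x| := by
        simp_rw [← abs_mul]
        exact MeasureTheory.abs_integral_le_integral_abs
    _ ≤ _ := holder

lemma abs_intervalIntegral_le_integral_abs_of_mem_Icc {h : ℝ → ℝ} (hh : Continuous h)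
    {x y : ℝ} (hx : x ∈ Icc a b) (hy : y ∈ Icc a b) :
    |∫ t in y..x, h t| ≤ ∫ t in a..b, |h t| := by
  have hab : a ≤ b := hx.1.trans hx.2
  have hsub : Ι y x ⊆ Ι a b := by
    rw [uIoc_of_le hab]
    exact Ioc_subset_Ioc (le_min hy.1 hx.1) (max_le hy.2 hx.2)
  have hnorm := norm_integral_le_abs_integral_norm (f := h) (a := y) (b := x) (μ := volume)
  have hmono := abs_integral_mono_interval (μ := volume) hsub
    (ae_of_all _ fun t => abs_nonneg (h t)) (hh.abs.intervalIntegrable a b)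
  simp only [norm_eq_abs] at hnorm
  rw [abs_of_nonneg (integral_nonneg hab fun _ _ => abs_nonneg _)] at hmono
  exact hnorm.trans hmono

lemma ContDiff.hasDerivAt_sq (hu : ContDiff ℝ 1 u) (t : ℝ) :
    HasDerivAt (fun s => u s ^ 2) (2 * u t * deriv u t) t := by
  simpa using (hu.differentiable one_ne_zero t).hasDerivAt.fun_pow 2

lemma exists_mem_Icc_sq_le_average (hab : a < b) (hu : Continuous u) :
    ∃ y ∈ Icc a b, u y ^ 2 ≤ (∫ x in a..b, u x ^ 2) / (b - a) := by
  obtain ⟨y, hy, hy_avg⟩ := exists_eq_interval_average hab.ne (hu.pow 2).continuousOn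
  rw [interval_average_eq_div] at hy_avg
  rw [uIoo_of_le hab.le] at hy
  exact ⟨y, Ioo_subset_Icc_self hy, hy_avg.le⟩

lemma sq_le_integral_sq_div_add_sqrt_mul_sqrt (hab : a < b) (hu : ContDiff ℝ 1 u) {x : ℝ}
    (hx : x ∈ Icc a b) :
    u x ^ 2 ≤ (∫ t in a..b, u t ^ 2) / (b - a)
      + 2 * (√(∫ t in a..b, u t ^ 2) * √(∫ t in a..b, deriv u t ^ 2)) := by
  have hcu := hu.continuous
  have hcdu := hu.continuous_deriv le_rfl
  obtain ⟨y, hy, hy_le⟩ := exists_mem_Icc_sq_le_average hab hcu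
  have hftc : u x ^ 2 - u y ^ 2 = ∫ t in y..x, 2 * u t * deriv u t :=
    (integral_eq_sub_of_hasDerivAt (fun t _ => hu.hasDerivAt_sq t)
      (((continuous_const.mul hcu).mul hcdu).intervalIntegrable _ _)).symm
  have hvar : |∫ t in y..x, 2 * u t * deriv u t| ≤ 2 * ∫ t in a..b, |u t| * |deriv u t| := by
    simpa only [abs_mul, abs_two, intervalIntegral.integral_const_mul, mul_assoc] using
      abs_intervalIntegral_le_integral_abs_of_mem_Icc (h := fun t => 2 * u t * deriv u t)
        (by fun_prop) hx hy
  have hcs := abs_intervalIntegral_mul_le hab.le hcu.abs hcdu.abs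
  simp only [sq_abs] at hcs
  linarith [le_abs_self (∫ t in a..b, |u t| * |deriv u t|),
    le_abs_self (∫ t in y..x, 2 * u t * deriv u t)]

lemma sq_le_mul_sqrt_mul_sqrt_of_mem_Icc (hab : a < b) (hu : ContDiff ℝ 1 u) {x : ℝ}
    (hx : x ∈ Icc a b) :
    u x ^ 2 ≤ (1 / (b - a) + 2) * (√(∫ t in a..b, u t ^ 2)
      * √((∫ t in a..b, u t ^ 2) + ∫ t in a..b, deriv u t ^ 2)) := by
  set A := ∫ t in a..b, u t ^ 2
  set B := ∫ t in a..b, deriv u t ^ 2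
  have hA : 0 ≤ A := integral_nonneg hab.le fun _ _ => sq_nonneg _
  have hB : 0 ≤ B := integral_nonneg hab.le fun _ _ => sq_nonneg _
  have hAA : A ≤ √A * √(A + B) :=
    calc A = √A * √A := (mul_self_sqrt hA).symm
      _ ≤ √A * √(A + B) := by gcongr; linarith
  have hAB : √A * √B ≤ √A * √(A + B) := by gcongr; linarith
  have hlen : 0 < 1 / (b - a) := by simpa using hab
  calc u x ^ 2 ≤ A / (b - a) + 2 * (√A * √B) := sq_le_integral_sq_div_add_sqrt_mul_sqrt hab hu hx
    _ ≤ _ := by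
      rw [div_eq_mul_one_div, add_mul]
      nlinarith

lemma integral_sq_sq_le (hab : a < b) (hu : ContDiff ℝ 1 u) :
    ∫ t in a..b, (u t ^ 2) ^ 2 ≤ (1 / (b - a) + 2) * (√(∫ t in a..b, u t ^ 2)
      * √((∫ t in a..b, u t ^ 2) + ∫ t in a..b, deriv u t ^ 2)) * ∫ t in a..b, u t ^ 2 := by
  rw [← intervalIntegral.integral_const_mul]
  have hcu := hu.continuous
  refine integral_mono_on hab.le ((hcu.pow 2).pow 2 |>.intervalIntegrable _ _)
    ((continuous_const.mul (hcu.pow 2)).intervalIntegrable _ _) fun x hx => ?_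
  rw [sq (u x ^ 2)]
  exact mul_le_mul_of_nonneg_right (sq_le_mul_sqrt_mul_sqrt_of_mem_Icc hab hu hx) (sq_nonneg _)

lemma integral_mul_deriv_mul_eq_neg_half_integral {φ : ℝ → ℝ} (hu : ContDiff ℝ 1 u)
    (hφ : ContDiff ℝ 1 φ) (ha : φ a = 0) (hb : φ b = 0) :
    ∫ x in a..b, u x * deriv u x * φ x = -((∫ x in a..b, u x ^ 2 * deriv φ x) / 2) := by
  have hibp := integral_mul_deriv_eq_deriv_mul (a := a) (b := b) (u := fun x => u x ^ 2 / 2)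
    (u' := fun x => u x * deriv u x) (v := φ) (v' := deriv φ)
    (fun x _ => by convert (hu.hasDerivAt_sq x).div_const 2 using 1; ring)
    (fun x _ => (hφ.differentiable one_ne_zero x).hasDerivAt)
    ((hu.continuous.mul (hu.continuous_deriv le_rfl)).intervalIntegrable _ _)
    ((hφ.continuous_deriv le_rfl).intervalIntegrable _ _)
  simp only [ha, hb, mul_zero, sub_zero, zero_sub, div_mul_eq_mul_div,
    intervalIntegral.integral_div] at hibp
  linarith

end

lemma sqrt_mul_sqrt_mul_sqrt_mul_self_eq_rpow {c A A' : ℝ} (hc : 0 ≤ c) (hA : 0 ≤ A)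
    (hA' : 0 ≤ A') :
    √(c * (√A * √A') * A) = √c * A ^ ((3 : ℝ) / 4) * A' ^ ((1 : ℝ) / 4) := by
  simp only [sqrt_eq_rpow]
  rw [mul_rpow (by positivity) hA, mul_rpow hc (by positivity),
    mul_rpow (by positivity) (by positivity), ← rpow_mul hA, ← rpow_mul hA',
    show (3 : ℝ) / 4 = 1 / 2 * (1 / 2) + 1 / 2 by norm_num, rpow_add' hA (by norm_num)]
  norm_num
  ring

theorem stmt_9 :
    ∀ k > (0:ℝ), ∃ C > (0:ℝ),
      ∀ u φ : ℝ → ℝ, ContDiff ℝ 1 u → ContDiff ℝ 1 φ →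
        Function.support φ ⊆ Set.Ioo (-k) k →
        |∫ x in (-k)..k, u x * deriv u x * φ x| ≤
          C * (∫ x in (-k)..k, (u x)^2) ^ ((3:ℝ)/4)
            * ((∫ x in (-k)..k, (u x)^2) + ∫ x in (-k)..k, (deriv u x)^2) ^ ((1:ℝ)/4)
            * ((∫ x in (-k)..k, (φ x)^2) + ∫ x in (-k)..k, (deriv φ x)^2) ^ ((1:ℝ)/2) := by
  intro k hk
  refine ⟨√(1 / (2 * k) + 2) / 2, by positivity, fun u φ hu hφ hsupp => ?_⟩
  have hk' : -k < k := by linarith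
  have hφ_left : φ (-k) = 0 := Function.notMem_support.mp fun h => (hsupp h).1.false
  have hφ_right : φ k = 0 := Function.notMem_support.mp fun h => (hsupp h).2.false
  set A := ∫ x in (-k)..k, u x ^ 2
  set B := ∫ x in (-k)..k, deriv u x ^ 2
  have hA : 0 ≤ A := integral_nonneg hk'.le fun _ _ => sq_nonneg _
  have hB : 0 ≤ B := integral_nonneg hk'.le fun _ _ => sq_nonneg _
  rw [integral_mul_deriv_mul_eq_neg_half_integral hu hφ hφ_left hφ_right, abs_neg, abs_div,
    abs_two, ← sqrt_eq_rpow]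
  calc |∫ x in (-k)..k, u x ^ 2 * deriv φ x| / 2
      ≤ √(∫ x in (-k)..k, (u x ^ 2) ^ 2) * √(∫ x in (-k)..k, deriv φ x ^ 2) / 2 := by
        gcongr
        exact abs_intervalIntegral_mul_le hk'.le (hu.continuous.pow 2)
          (hφ.continuous_deriv le_rfl)
    _ ≤ √((1 / (2 * k) + 2) * (√A * √(A + B)) * A)
          * √((∫ x in (-k)..k, φ x ^ 2) + ∫ x in (-k)..k, deriv φ x ^ 2) / 2 := by
        gcongr
        · rw [show 2 * k = k - -k by ring]
          exact integral_sq_sq_le hk' hu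
        · exact le_add_of_nonneg_left (integral_nonneg hk'.le fun _ _ => sq_nonneg _)
    _ = _ := by
        rw [sqrt_mul_sqrt_mul_sqrt_mul_self_eq_rpow (by positivity) hA (by positivity)]
        ring
end

section
/- Let x₁ < 0 < x₂ be real numbers, let B ≥ 0 and C ≥ 0 with B + C > 0, and let δ > 0 and α > 0. Then there exists an infinitely differentiable function p : ℝ → ℝ such that p(x₁) = δ, p'(x) > α for all x ∈ [x₁, x₂], and B p'''(x) + C p''(x) ≤ −2 for all x ∈ [x₁, x₂]. -/
theorem stmt_11 (x₁ x₂ : ℝ) (hx₁ : x₁ < 0) (hx₂ : 0 < x₂)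
    (B C : ℝ) (hB : 0 ≤ B) (hC : 0 ≤ C) (hBC : 0 < B + C)
    (δ α : ℝ) (hδ : 0 < δ) (hα : 0 < α) :
    ∃ p : ℝ → ℝ, ContDiff ℝ (⊤ : ℕ∞) p ∧ p x₁ = δ ∧
      (∀ x ∈ Set.Icc x₁ x₂, α < deriv p x) ∧
      (∀ x ∈ Set.Icc x₁ x₂,
        B * deriv (deriv (deriv p)) x + C * deriv (deriv p) x ≤ -2) := by
  set b : ℝ := 1 / (B + C) with hb
  have hbpos : 0 < b := by positivity
  have hbBC : b * (B + C) = 1 := by rw [hb, one_div, inv_mul_cancel₀ hBC.ne']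
  set L : ℝ := x₂ - x₁ with hL
  have hLpos : 0 < L := by simp [hL]; linarith
  set a : ℝ := α + 1 + b * (2 * L + 3 * L ^ 2) with ha
  refine ⟨fun x => δ + a * (x - x₁) - b * ((x - x₁) ^ 2 + (x - x₁) ^ 3), ?_, by ring, ?_, ?_⟩
  · fun_prop
  all_goals
    have hp : ∀ x : ℝ, HasDerivAt
        (fun x => δ + a * (x - x₁) - b * ((x - x₁) ^ 2 + (x - x₁) ^ 3))
        (a - b * (2 * (x - x₁) + 3 * (x - x₁) ^ 2)) x := by
      intro x
      have h : HasDerivAt (fun x : ℝ => x - x₁) 1 x := (hasDerivAt_id x).sub_const x₁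
      have := ((hasDerivAt_const x δ).add (h.const_mul a)).sub
        (((h.pow 2).add (h.pow 3)).const_mul b)
      exact this.congr_deriv (by ring)
    have hdp : deriv (fun x => δ + a * (x - x₁) - b * ((x - x₁) ^ 2 + (x - x₁) ^ 3))
        = fun x => a - b * (2 * (x - x₁) + 3 * (x - x₁) ^ 2) := funext fun x => (hp x).deriv
  · intro x hx
    rw [hdp]
    have ht0 : 0 ≤ x - x₁ := by linarith [hx.1]
    have htL : x - x₁ ≤ L := by simp [hL]; linarith [hx.2]
    have : b * (2 * (x - x₁) + 3 * (x - x₁) ^ 2) ≤ b * (2 * L + 3 * L ^ 2) := by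
      apply mul_le_mul_of_nonneg_left _ hbpos.le
      nlinarith
    simp only [ha]
    linarith
  · intro x hx
    rw [hdp]
    have hq : ∀ x : ℝ, HasDerivAt (fun x => a - b * (2 * (x - x₁) + 3 * (x - x₁) ^ 2))
        (-(b * (2 + 6 * (x - x₁)))) x := by
      intro x
      have h : HasDerivAt (fun x : ℝ => x - x₁) 1 x := (hasDerivAt_id x).sub_const x₁
      have := (hasDerivAt_const x a).sub (((h.const_mul 2).add ((h.pow 2).const_mul 3)).const_mul b)
      exact this.congr_deriv (by ring)
    have hdq : deriv (fun x => a - b * (2 * (x - x₁) + 3 * (x - x₁) ^ 2))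
        = fun x => -(b * (2 + 6 * (x - x₁))) := funext fun x => (hq x).deriv
    rw [hdq]
    have hr : ∀ x : ℝ, HasDerivAt (fun x => -(b * (2 + 6 * (x - x₁)))) (-(6 * b)) x := by
      intro x
      have h : HasDerivAt (fun x : ℝ => x - x₁) 1 x := (hasDerivAt_id x).sub_const x₁
      have := (((hasDerivAt_const x (2:ℝ)).add (h.const_mul 6)).const_mul b).neg
      exact this.congr_deriv (by ring)
    have hdr : deriv (fun x => -(b * (2 + 6 * (x - x₁)))) = fun _ => -(6 * b) :=
      funext fun x => (hr x).deriv
    rw [hdr]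
    have ht0 : 0 ≤ x - x₁ := by linarith [hx.1]
    simp only
    nlinarith [mul_nonneg (mul_nonneg hbpos.le hC) ht0, mul_nonneg hbpos.le hB, hbBC]
end
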